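/- Let f : ℝ² ∖ S → ℂ, where S = (−∞,0]×{0}, be the principal branch of the complex square root, given in polar coordinates (r, φ) ∈ (0,∞)×(−π,π) by f(r,φ) = √r (cos(φ/2) + i sin(φ/2)). For 0 < ε < x₀ < π/2 let Q(x₀,ε) := {(r,φ) : |r − x₀| < ε, π − ε < |φ| < π}. Then the mean of Im f over Q(x₀,ε) is 0, and the mean oscillation mo(Im f, Q(x₀,ε)) = (2/5) sin(ε/2) · ((x₀+ε)^{5/2} − (x₀−ε)^{5/2})/(x₀ ε²) converges to √x₀ as ε → 0. Consequently f does not have vanishing mean oscillation on any neighborhood of the origin. -/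

import Mathlib

/-!
In polar coordinates the box `Q(x₀,ε)` is the product of the interval `|r - x₀| < ε` with the two
arcs `π - ε < |φ| < π`, and the area element `r dr dφ` factors, so every integral splits into a
radial and an angular one. Since `Im f = √r sin (φ/2)` is odd in `φ`, its mean vanishes, and the
mean oscillation is an explicit ratio whose limit is read off from the derivatives at `0` of
`sin (ε/2)` and of `(x₀ + ε)^{5/2} - (x₀ - ε)^{5/2}`.

For the failure of VMO: on a square centred at `(-δ/2, 0)` of half side at most `δ/4` we have
`Re z ≤ -δ/4`, hence `|Im √z| ≥ √(δ/4)` because `Re z = (Re √z)² - (Im √z)²`. Off the cut,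
`Im √z̄ = -Im √z`, and for a function `u` that is odd under a measure-preserving symmetry of `Q`,
`∫_Q |u| ≤ ∫_Q |u - c|` for every constant `c`. So the mean oscillation on these squares stays
above `√(δ/4)`, however small they are.
-/

open MeasureTheory Real Filter

/-- The square root function in polar coordinates: `√r (cos(φ/2) + i sin(φ/2))`. -/
noncomputable def sqrtPolar (r φ : ℝ) : ℂ :=
  (Real.sqrt r : ℂ) * ((Real.cos (φ / 2) : ℂ) + (Real.sin (φ / 2) : ℂ) * Complex.I)

/-- The polar box `Q(x₀,ε) = {(r,φ) : |r − x₀| < ε, π − ε < |φ| < π}`. -/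
def Qpolar (x₀ ε : ℝ) : Set (ℝ × ℝ) :=
  {p | |p.1 - x₀| < ε ∧ π - ε < |p.2| ∧ |p.2| < π}

/-- The plane measure in polar coordinates: `r dr dφ`. -/
noncomputable def polarMeasure : Measure (ℝ × ℝ) :=
  volume.withDensity fun p => ENNReal.ofReal p.1

/-- The principal branch of the complex square root, as a function on `ℝ²`. -/
noncomputable def sqrtCartesian (v : ℝ × ℝ) : ℂ :=
  ((v.1 : ℂ) + (v.2 : ℂ) * Complex.I) ^ ((1 : ℂ) / 2)

/-- An open square (cube in `ℝ²`) with center `c` and half side `t`. -/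
def square (c : ℝ × ℝ) (t : ℝ) : Set (ℝ × ℝ) :=
  {v | |v.1 - c.1| < t ∧ |v.2 - c.2| < t}

/-- The mean oscillation of `g` over `Q` (w.r.t. Lebesgue measure). -/
noncomputable def meanOsc (g : ℝ × ℝ → ℂ) (Q : Set (ℝ × ℝ)) : ℝ :=
  ⨍ v in Q, ‖g v - ⨍ w in Q, g w‖

open Set Topology
open scoped ENNReal

lemma im_sqrtPolar (r φ : ℝ) : (sqrtPolar r φ).im = √r * sin (φ / 2) := by
  simp only [sqrtPolar, Complex.mul_im, Complex.add_im, Complex.add_re, Complex.ofReal_re,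
    Complex.ofReal_im, Complex.mul_re, Complex.I_re, Complex.I_im]
  ring

def polarArcs (ε : ℝ) : Set ℝ := Ioo (-π) (-(π - ε)) ∪ Ioo (π - ε) π

lemma Qpolar_eq_prod {x₀ ε : ℝ} (hε : ε ≤ π) :
    Qpolar x₀ ε = Ioo (x₀ - ε) (x₀ + ε) ×ˢ polarArcs ε := by
  ext ⟨r, φ⟩
  simp only [Qpolar, polarArcs, mem_ofPred_eq, mem_prod, mem_union, mem_Ioo, abs_sub_lt_iff]
  rcases abs_cases φ with ⟨h, hφ⟩ | ⟨h, hφ⟩ <;> rw [h] <;> grind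

lemma setIntegral_prod_polarMeasure {A B : Set ℝ} (hA : MeasurableSet A) (hB : MeasurableSet B)
    (hA₀ : A ⊆ Ici 0) (f g : ℝ → ℝ) :
    ∫ p in A ×ˢ B, f p.1 * g p.2 ∂polarMeasure = (∫ r in A, r * f r) * ∫ φ in B, g φ := by
  rw [polarMeasure, setIntegral_withDensity_eq_setIntegral_toReal_smul' _ (by fun_prop)
    (Eventually.of_forall fun _ => ENNReal.ofReal_lt_top)]
  rw [← setIntegral_prod_mul, Measure.volume_eq_prod]
  refine setIntegral_congr_fun (hA.prod hB) fun p hp => ?_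
  simp [ENNReal.toReal_ofReal (hA₀ hp.1)]
  ring

lemma setIntegral_Qpolar {x₀ ε : ℝ} (hεx : ε ≤ x₀) (hε : ε ≤ π) (f g : ℝ → ℝ) :
    ∫ p in Qpolar x₀ ε, f p.1 * g p.2 ∂polarMeasure =
      (∫ r in Ioo (x₀ - ε) (x₀ + ε), r * f r) * ∫ φ in polarArcs ε, g φ := by
  rw [Qpolar_eq_prod hε]
  exact setIntegral_prod_polarMeasure measurableSet_Ioo
    (measurableSet_Ioo.union measurableSet_Ioo)
    (fun _ hr => (sub_nonneg.2 hεx).trans hr.1.le) f g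

lemma integral_Ioo_mul_sqrt {a b : ℝ} (ha : 0 ≤ a) (hab : a ≤ b) :
    ∫ r in Ioo a b, r * √r = 2 / 5 * (b ^ ((5 : ℝ) / 2) - a ^ ((5 : ℝ) / 2)) := by
  have h : ∀ r ∈ Ioo a b, r * √r = r ^ ((3 : ℝ) / 2) := fun r hr => by
    rw [sqrt_eq_rpow, show (3 : ℝ) / 2 = 1 + 1 / 2 by norm_num, rpow_add (ha.trans_lt hr.1),
      rpow_one]
  rw [setIntegral_congr_fun measurableSet_Ioo h, integral_Ioc_eq_integral_Ioo.symm,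
    ← intervalIntegral.integral_of_le hab, integral_rpow (Or.inl (by norm_num))]
  norm_num
  ring

lemma integral_Ioo_id {a b : ℝ} (hab : a ≤ b) :
    ∫ r in Ioo a b, r = (b ^ 2 - a ^ 2) / 2 := by
  rw [← integral_Ioc_eq_integral_Ioo, ← intervalIntegral.integral_of_le hab]
  simp

lemma integral_Ioo_union_neg {g : ℝ → ℝ} (hg : Continuous g) {a b : ℝ} (ha : 0 ≤ a)
    (hab : a ≤ b) :
    ∫ φ in Ioo (-b) (-a) ∪ Ioo a b, g φ = ∫ φ in Ioo a b, (g (-φ) + g φ) := by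
  have hdisj : Disjoint (Ioo (-b) (-a)) (Ioo a b) :=
    Ioo_disjoint_Ioo.2 ((min_le_left _ _).trans ((neg_le_self ha).trans (le_max_right _ _)))
  have hint {f : ℝ → ℝ} (hf : Continuous f) (c d : ℝ) : IntegrableOn f (Ioo c d) :=
    hf.integrableOn_Icc.mono_set Ioo_subset_Icc_self
  rw [setIntegral_union hdisj measurableSet_Ioo (hint hg _ _) (hint hg _ _),
    integral_add (hint (f := fun φ => g (-φ)) (by fun_prop) _ _) (hint hg _ _)]
  simp only [← integral_Ioc_eq_integral_Ioo, ← intervalIntegral.integral_of_le hab,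
    ← intervalIntegral.integral_of_le (neg_le_neg hab), intervalIntegral.integral_comp_neg]

lemma integral_Ioo_sin_half {a b : ℝ} (hab : a ≤ b) :
    ∫ φ in Ioo a b, sin (φ / 2) = 2 * (cos (a / 2) - cos (b / 2)) := by
  rw [← integral_Ioc_eq_integral_Ioo, ← intervalIntegral.integral_of_le hab,
    intervalIntegral.integral_comp_div (f := sin) two_ne_zero, integral_sin, smul_eq_mul]

lemma integral_polarArcs_sin_half {ε : ℝ} (hε₀ : 0 ≤ ε) (hε : ε ≤ π) :
    ∫ φ in polarArcs ε, sin (φ / 2) = 0 := by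
  rw [polarArcs, integral_Ioo_union_neg (by fun_prop) (by linarith) (by linarith)]
  simp [neg_div]

lemma integral_polarArcs_abs_sin_half {ε : ℝ} (hε₀ : 0 ≤ ε) (hε : ε ≤ π) :
    ∫ φ in polarArcs ε, |sin (φ / 2)| = 4 * sin (ε / 2) := by
  rw [polarArcs, integral_Ioo_union_neg (by fun_prop) (by linarith) (by linarith)]
  have h : ∀ φ ∈ Ioo (π - ε) π, |sin (-φ / 2)| + |sin (φ / 2)| = 2 * sin (φ / 2) := fun φ hφ => by
    rw [neg_div, sin_neg, abs_neg, abs_of_nonneg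
      (sin_nonneg_of_nonneg_of_le_pi (by linarith [hφ.1]) (by linarith [hφ.2, pi_pos]))]
    ring
  rw [setIntegral_congr_fun measurableSet_Ioo h, integral_const_mul,
    integral_Ioo_sin_half (by linarith), cos_pi_div_two, sub_div, cos_pi_div_two_sub]
  ring

lemma integral_polarArcs_one {ε : ℝ} (hε₀ : 0 ≤ ε) (hε : ε ≤ π) :
    ∫ _ in polarArcs ε, (1 : ℝ) = 2 * ε := by
  rw [polarArcs, integral_Ioo_union_neg (by fun_prop) (by linarith) (by linarith)]
  norm_num [hε₀, mul_comm]

lemma integral_Qpolar_im_sqrtPolar {x₀ ε : ℝ} (hε₀ : 0 ≤ ε) (hεx : ε ≤ x₀) (hε : ε ≤ π) :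
    ∫ p in Qpolar x₀ ε, (sqrtPolar p.1 p.2).im ∂polarMeasure = 0 := by
  simp_rw [im_sqrtPolar]
  rw [setIntegral_Qpolar hεx hε sqrt (fun φ => sin (φ / 2)), integral_polarArcs_sin_half hε₀ hε,
    mul_zero]

lemma integral_Qpolar_abs_im_sqrtPolar {x₀ ε : ℝ} (hε₀ : 0 ≤ ε) (hεx : ε ≤ x₀) (hε : ε ≤ π) :
    ∫ p in Qpolar x₀ ε, |(sqrtPolar p.1 p.2).im| ∂polarMeasure =
      2 / 5 * ((x₀ + ε) ^ ((5 : ℝ) / 2) - (x₀ - ε) ^ ((5 : ℝ) / 2)) * (4 * sin (ε / 2)) := by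
  simp_rw [im_sqrtPolar, abs_mul, abs_of_nonneg (sqrt_nonneg _)]
  rw [setIntegral_Qpolar hεx hε sqrt (fun φ => |sin (φ / 2)|),
    integral_Ioo_mul_sqrt (by linarith) (by linarith), integral_polarArcs_abs_sin_half hε₀ hε]

lemma polarMeasure_Qpolar {x₀ ε : ℝ} (hε₀ : 0 ≤ ε) (hεx : ε ≤ x₀) (hε : ε ≤ π) :
    (polarMeasure (Qpolar x₀ ε)).toReal = 4 * x₀ * ε ^ 2 := by
  have h := setIntegral_Qpolar hεx hε (fun _ => 1) (fun _ => 1)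
  simp only [mul_one] at h
  rw [setIntegral_const, smul_eq_mul, mul_one, integral_Ioo_id (by linarith),
    integral_polarArcs_one hε₀ hε] at h
  rw [← measureReal_def, h]
  ring

lemma HasDerivAt.tendsto_div_self {f : ℝ → ℝ} {f' : ℝ} (hf : HasDerivAt f f' 0) (h₀ : f 0 = 0) :
    Tendsto (fun t => f t / t) (𝓝[>] 0) (𝓝 f') := by
  simpa [h₀, div_eq_inv_mul] using hf.tendsto_slope_zero_right

lemma hasDerivAt_rpow_five_halves_sub {x₀ : ℝ} (hx₀ : 0 < x₀) :
    HasDerivAt (fun ε : ℝ => (x₀ + ε) ^ ((5 : ℝ) / 2) - (x₀ - ε) ^ ((5 : ℝ) / 2))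
      (5 * x₀ ^ ((3 : ℝ) / 2)) 0 := by
  have hadd := ((hasDerivAt_id (0 : ℝ)).const_add x₀).rpow_const (p := 5 / 2) (by simp [hx₀.ne'])
  have hsub := ((hasDerivAt_id (0 : ℝ)).const_sub x₀).rpow_const (p := 5 / 2) (by simp [hx₀.ne'])
  refine (hadd.fun_sub hsub).congr_deriv ?_
  norm_num
  ring

lemma tendsto_Qpolar_meanOsc_formula {x₀ : ℝ} (hx₀ : 0 < x₀) :
    Tendsto (fun ε : ℝ => (2 / 5) * sin (ε / 2) *
        ((x₀ + ε) ^ ((5 : ℝ) / 2) - (x₀ - ε) ^ ((5 : ℝ) / 2)) / (x₀ * ε ^ 2))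
      (𝓝[>] 0) (𝓝 (√x₀)) := by
  have hsin : HasDerivAt (fun ε : ℝ => sin (ε / 2)) (1 / 2) 0 := by
    simpa using ((hasDerivAt_id (0 : ℝ)).div_const 2).sin
  have h := ((hsin.tendsto_div_self (by simp)).mul
    ((hasDerivAt_rpow_five_halves_sub hx₀).tendsto_div_self (by simp))).const_mul (2 / (5 * x₀))
  have hlim : 2 / (5 * x₀) * (1 / 2 * (5 * x₀ ^ ((3 : ℝ) / 2))) = √x₀ := by
    rw [sqrt_eq_rpow, show (3 : ℝ) / 2 = 1 + 1 / 2 by norm_num, rpow_add hx₀, rpow_one]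
    field_simp
  rw [hlim] at h
  refine h.congr' (eventually_nhdsWithin_of_forall fun ε (hε : 0 < ε) => ?_)
  field_simp

lemma integral_abs_le_integral_abs_sub_of_odd {α : Type*} [MeasurableSpace α] {μ : Measure α}
    {T : α → α} (hT : MeasurePreserving T μ μ) (hTe : MeasurableEmbedding T) {Q : Set α}
    (hTQ : T ⁻¹' Q = Q) (hQ : μ Q ≠ ∞) {u : α → ℝ} (hu : IntegrableOn u Q μ)
    (hodd : ∀ᵐ x ∂μ.restrict Q, u (T x) = -u x) (c : ℝ) :
    ∫ x in Q, |u x| ∂μ ≤ ∫ x in Q, |u x - c| ∂μ := by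
  have : IsFiniteMeasure (μ.restrict Q) := isFiniteMeasure_restrict.2 hQ
  have hreflect : ∫ x in Q, |u x + c| ∂μ = ∫ x in Q, |u x - c| ∂μ := by
    conv_rhs => rw [← hT.setIntegral_preimage_emb hTe (fun x => |u x - c|) Q, hTQ]
    refine integral_congr_ae (hodd.mono fun x hx => ?_)
    simp only [hx, ← abs_neg (-u x - c), neg_sub, sub_neg_eq_add, add_comm]
  have hsub : IntegrableOn (fun x => |u x - c|) Q μ := (hu.sub (integrable_const c)).abs
  have hadd : IntegrableOn (fun x => |u x + c|) Q μ := (hu.add (integrable_const c)).abs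
  have h2 : ∫ x in Q, 2 * |u x| ∂μ ≤ ∫ x in Q, (|u x - c| + |u x + c|) ∂μ :=
    integral_mono (hu.abs.const_mul 2) (hsub.add hadd) fun x => by
      simpa [abs_mul, ← two_mul] using abs_add_le (u x - c) (u x + c)
  rw [integral_const_mul, integral_add hsub hadd, hreflect] at h2
  linarith

lemma le_meanOsc_of_le_abs_im {g : ℝ × ℝ → ℂ} {Q : Set (ℝ × ℝ)} (hQ : MeasurableSet Q)
    (hQ₀ : volume Q ≠ 0) (hQ₁ : volume Q ≠ ∞) (hTQ : (fun v : ℝ × ℝ => (v.1, -v.2)) ⁻¹' Q = Q)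
    (hg : IntegrableOn g Q) (hodd : ∀ᵐ v ∂volume.restrict Q, (g (v.1, -v.2)).im = -(g v).im)
    {b : ℝ} (hb : ∀ v ∈ Q, b ≤ |(g v).im|) : b ≤ meanOsc g Q := by
  have hT : MeasurePreserving (fun v : ℝ × ℝ => (v.1, -v.2)) volume volume := by
    rw [Measure.volume_eq_prod]
    exact (MeasurePreserving.id volume).prod (Measure.measurePreserving_neg volume)
  have hTe : MeasurableEmbedding (fun v : ℝ × ℝ => (v.1, -v.2)) :=
    ((MeasurableEquiv.refl ℝ).prodCongr (MeasurableEquiv.neg ℝ)).measurableEmbedding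
  set m := ⨍ w in Q, g w
  have : IsFiniteMeasure (volume.restrict Q) := isFiniteMeasure_restrict.2 hQ₁
  have hvol : 0 < volume.real Q := ENNReal.toReal_pos hQ₀ hQ₁
  have key : volume.real Q * b ≤ ∫ v in Q, ‖g v - m‖ :=
    calc volume.real Q * b = ∫ _ in Q, b := by rw [setIntegral_const, smul_eq_mul]
      _ ≤ ∫ v in Q, |(g v).im| :=
        setIntegral_mono_on (integrableOn_const hQ₁) hg.im.abs hQ hb
      _ ≤ ∫ v in Q, |(g v).im - m.im| :=
        integral_abs_le_integral_abs_sub_of_odd hT hTe hTQ hQ₁ hg.im hodd m.im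
      _ ≤ ∫ v in Q, ‖g v - m‖ :=
        integral_mono (hg.im.sub (integrable_const _)).abs (hg.sub (integrable_const m)).norm
          fun v => by simpa using Complex.abs_im_le_norm (g v - m)
  rw [meanOsc, setAverage_eq, smul_eq_mul, le_inv_mul_iff₀ hvol]
  exact key

lemma sqrt_neg_re_le_abs_im_cpow_one_half (z : ℂ) : √(-z.re) ≤ |(z ^ (1 / 2 : ℂ)).im| := by
  have hsq : (z ^ (1 / 2 : ℂ)) ^ 2 = z := by simp
  have hre : z.re = (z ^ (1 / 2 : ℂ)).re ^ 2 - (z ^ (1 / 2 : ℂ)).im ^ 2 := by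
    conv_lhs => rw [← hsq]
    simp [sq]
  rw [← sqrt_sq_eq_abs]
  exact sqrt_le_sqrt (by nlinarith [sq_nonneg (z ^ (1 / 2 : ℂ)).re])

lemma im_conj_cpow_one_half {z : ℂ} (hz : z.arg ≠ π) :
    ((starRingEnd ℂ) z ^ (1 / 2 : ℂ)).im = -(z ^ (1 / 2 : ℂ)).im := by
  rw [Complex.conj_cpow z _ hz]
  simp [map_ofNat]

lemma measurable_sqrtCartesian : Measurable sqrtCartesian := by
  unfold sqrtCartesian
  fun_prop

lemma norm_sqrtCartesian_le (v : ℝ × ℝ) : ‖sqrtCartesian v‖ ≤ √(|v.1| + |v.2|) := by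
  refine (Complex.norm_cpow_le _ _).trans ?_
  rw [show ((1 : ℂ) / 2).re = 1 / 2 by norm_num, show ((1 : ℂ) / 2).im = 0 by norm_num, mul_zero,
    exp_zero, div_one, ← sqrt_eq_rpow]
  exact sqrt_le_sqrt ((Complex.norm_le_abs_re_add_abs_im _).trans (by simp))

lemma sqrt_le_abs_im_sqrtCartesian {v : ℝ × ℝ} {a : ℝ} (h : v.1 ≤ -a) :
    √a ≤ |(sqrtCartesian v).im| :=
  (sqrt_le_sqrt (by simp [le_neg_of_le_neg h])).trans (sqrt_neg_re_le_abs_im_cpow_one_half _)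

lemma ae_im_sqrtCartesian_reflect :
    ∀ᵐ v : ℝ × ℝ, (sqrtCartesian (v.1, -v.2)).im = -(sqrtCartesian v).im := by
  have hoff_axis : ∀ᵐ v : ℝ × ℝ, v.2 ≠ 0 := by
    have : {v : ℝ × ℝ | ¬ v.2 ≠ 0} = univ ×ˢ {0} := by ext; simp
    rw [ae_iff, this, Measure.volume_eq_prod, Measure.prod_prod]
    simp
  filter_upwards [hoff_axis] with v hv
  have harg : ((v.1 : ℂ) + v.2 * Complex.I).arg ≠ π :=
    fun h => hv (by simpa using (Complex.arg_eq_pi_iff.1 h).2)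
  have hconj : ((v.1 : ℂ) + ((-v.2 : ℝ) : ℂ) * Complex.I) =
      (starRingEnd ℂ) ((v.1 : ℂ) + v.2 * Complex.I) := by
    apply Complex.ext <;> simp
  simp only [sqrtCartesian]
  rw [hconj, im_conj_cpow_one_half harg]

lemma square_eq_prod (c : ℝ × ℝ) (t : ℝ) :
    square c t = Ioo (c.1 - t) (c.1 + t) ×ˢ Ioo (c.2 - t) (c.2 + t) := by
  ext v
  simp only [square, mem_ofPred_eq, mem_prod, mem_Ioo, abs_sub_lt_iff]
  constructor <;> rintro ⟨⟨h₁, h₂⟩, h₃, h₄⟩ <;>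
    exact ⟨⟨by linarith, by linarith⟩, by linarith, by linarith⟩

lemma measurableSet_square (c : ℝ × ℝ) (t : ℝ) : MeasurableSet (square c t) := by
  rw [square_eq_prod]
  exact measurableSet_Ioo.prod measurableSet_Ioo

lemma volume_square (c : ℝ × ℝ) (t : ℝ) : volume (square c t) = ENNReal.ofReal (2 * t) ^ 2 := by
  rw [square_eq_prod, Measure.volume_eq_prod, Measure.prod_prod, Real.volume_Ioo,
    Real.volume_Ioo, sq]
  ring_nf

lemma volume_square_ne_top (c : ℝ × ℝ) (t : ℝ) : volume (square c t) ≠ ∞ := by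
  rw [volume_square]
  exact ENNReal.pow_ne_top ENNReal.ofReal_ne_top

lemma reflect_preimage_square (a t : ℝ) :
    (fun v : ℝ × ℝ => (v.1, -v.2)) ⁻¹' square (a, 0) t = square (a, 0) t := by
  ext v
  simp [square, abs_neg]

lemma closure_square_subset (c : ℝ × ℝ) (t : ℝ) :
    closure (square c t) ⊆ {v | |v.1 - c.1| ≤ t ∧ |v.2 - c.2| ≤ t} :=
  closure_minimal (fun _ hv => ⟨hv.1.le, hv.2.le⟩)
    ((isClosed_le (f := fun v : ℝ × ℝ => |v.1 - c.1|) (by fun_prop) continuous_const).inter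
      (isClosed_le (f := fun v : ℝ × ℝ => |v.2 - c.2|) (by fun_prop) continuous_const))

lemma integrableOn_sqrtCartesian_square (c : ℝ × ℝ) (t : ℝ) :
    IntegrableOn sqrtCartesian (square c t) := by
  refine Measure.integrableOn_of_bounded (M := √(|c.1| + |c.2| + 2 * t))
    (volume_square_ne_top c t) measurable_sqrtCartesian.aestronglyMeasurable
    ((ae_restrict_iff' (measurableSet_square c t)).2 (ae_of_all _ fun v hv => ?_))
  refine (norm_sqrtCartesian_le v).trans (sqrt_le_sqrt ?_)
  have h₁ := abs_sub_abs_le_abs_sub v.1 c.1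
  have h₂ := abs_sub_abs_le_abs_sub v.2 c.2
  linarith [hv.1, hv.2]

lemma not_vmo_sqrtCartesian {U : Set (ℝ × ℝ)} (hU : IsOpen U) (h₀ : ((0, 0) : ℝ × ℝ) ∈ U) :
    ¬ (∀ η : ℝ, 0 < η → ∃ s : ℝ, 0 < s ∧
        ∀ (c : ℝ × ℝ) (t : ℝ), 0 < t → t ≤ s → closure (square c t) ⊆ U →
          meanOsc sqrtCartesian (square c t) ≤ η) := by
  obtain ⟨δ, hδ, hball⟩ := Metric.isOpen_iff.1 hU _ h₀
  push Not
  refine ⟨√(δ / 4) / 2, by positivity, fun s hs => ?_⟩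
  have ht : 0 < min s (δ / 4) := lt_min hs (by positivity)
  have htδ : min s (δ / 4) ≤ δ / 4 := min_le_right _ _
  refine ⟨(-(δ / 2), 0), min s (δ / 4), ht, min_le_left _ _, fun v hv => hball ?_, ?_⟩
  · obtain ⟨h₁, h₂⟩ := closure_square_subset _ _ hv
    rw [Metric.mem_ball, Prod.dist_eq, Real.dist_eq, Real.dist_eq]
    simp only [abs_le] at h₁ h₂
    apply max_lt <;> rw [abs_lt] <;> constructor <;> linarith
  · have hb : ∀ v ∈ square (-(δ / 2), 0) (min s (δ / 4)), √(δ / 4) ≤ |(sqrtCartesian v).im| :=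
      fun v hv => sqrt_le_abs_im_sqrtCartesian (by linarith [(abs_lt.1 hv.1).2])
    have hvol : volume (square (-(δ / 2), 0) (min s (δ / 4))) ≠ 0 := by
      rw [volume_square]
      exact pow_ne_zero _ (ENNReal.ofReal_pos.2 (by linarith)).ne'
    calc √(δ / 4) / 2 < √(δ / 4) := half_lt_self (by positivity)
      _ ≤ _ := le_meanOsc_of_le_abs_im (measurableSet_square _ _) hvol
        (volume_square_ne_top _ _) (reflect_preimage_square _ _)
        (integrableOn_sqrtCartesian_square _ _)
        (ae_restrict_of_ae ae_im_sqrtCartesian_reflect) hb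

/-- The principal square root is not `VMO` near the origin: for `0 < ε < x₀ < π/2`,
the mean of `Im √` over the polar box `Q(x₀,ε)` (w.r.t. the area element `r dr dφ`)
is `0`, its mean oscillation there equals
`(2/5) sin(ε/2) ((x₀+ε)^{5/2} − (x₀−ε)^{5/2})/(x₀ ε²)`, which tends to `√x₀` as
`ε → 0⁺`; consequently `√` does not have vanishing mean oscillation on any
neighborhood of the origin. -/
theorem sqrt_not_VMO (x₀ : ℝ) (hx₀ : 0 < x₀) (hx₀' : x₀ < π / 2) :
    (∀ ε : ℝ, 0 < ε → ε < x₀ →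
      (∫ p in Qpolar x₀ ε, (sqrtPolar p.1 p.2).im ∂polarMeasure) = 0 ∧
      (∫ p in Qpolar x₀ ε, |(sqrtPolar p.1 p.2).im| ∂polarMeasure) /
          (polarMeasure (Qpolar x₀ ε)).toReal
        = (2 / 5) * Real.sin (ε / 2) *
            ((x₀ + ε) ^ ((5 : ℝ) / 2) - (x₀ - ε) ^ ((5 : ℝ) / 2)) / (x₀ * ε ^ 2)) ∧
    Tendsto (fun ε : ℝ => (2 / 5) * Real.sin (ε / 2) *
        ((x₀ + ε) ^ ((5 : ℝ) / 2) - (x₀ - ε) ^ ((5 : ℝ) / 2)) / (x₀ * ε ^ 2))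
      (nhdsWithin 0 (Set.Ioi 0)) (nhds (Real.sqrt x₀)) ∧
    (∀ U : Set (ℝ × ℝ), IsOpen U → ((0, 0) : ℝ × ℝ) ∈ U →
      ¬ (∀ η : ℝ, 0 < η → ∃ s : ℝ, 0 < s ∧
          ∀ (c : ℝ × ℝ) (t : ℝ), 0 < t → t ≤ s → closure (square c t) ⊆ U →
            meanOsc sqrtCartesian (square c t) ≤ η)) := by
  refine ⟨fun ε hε hεx => ?_, tendsto_Qpolar_meanOsc_formula hx₀,
    fun U hU h₀ => not_vmo_sqrtCartesian hU h₀⟩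
  have hεπ : ε ≤ π := by linarith [pi_pos]
  refine ⟨integral_Qpolar_im_sqrtPolar hε.le hεx.le hεπ, ?_⟩
  rw [integral_Qpolar_abs_im_sqrtPolar hε.le hεx.le hεπ, polarMeasure_Qpolar hε.le hεx.le hεπ]
  field_simp
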